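/- In a word w over Σ ∪ Σ̄ whose bar-erasure pattern (replacing each letter by open/close according to whether it is unbarred context of a matching pair) forms a balanced parenthesization, the number of distinct 'runs' in w is at least the number of barred letters plus the number of letters opening a parenthesis; hence minimizing the length of the run-length encoding g(w) over a language closed under f and g minimizes the total number of opens plus closes. -/
import Mathlib


/-- A letter of `Σ ∪ Σ̄`: a base letter together with a bar flag
(`(a, false)` is `a`, `(a, true)` is `ā`). -/
abbrev BLetter (A : Type) := A × Bool

/-- An indexed letter of `Σ' = {a_i, ā_i : a ∈ Σ, i ≥ 1}`: base letter, bar flag,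
positive index. -/
abbrev ILetter (A : Type) := A × Bool × ℕ+

/-- `f` on a single indexed letter: `f(a_i) = a^i` and `f(ā_i) = a^(i-1) ā`. -/
def expandL {A : Type} (l : ILetter A) : List (BLetter A) :=
  List.replicate ((l.2.2 : ℕ) - 1) (l.1, false) ++ [(l.1, l.2.1)]

/-- The monoid homomorphism `f : Σ'* → Σ*` determined by `expandL`. -/
def fword {A : Type} (w : List (ILetter A)) : List (BLetter A) :=
  (w.map expandL).flatten

/-- `g : Σ* → Σ'*`, the run-length encoding: each maximal run of letters with the same
base letter (all unbarred except possibly the last one, a bar always ending a run) is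
replaced by one indexed letter. -/
def gword {A : Type} [DecidableEq A] : List (BLetter A) → List (ILetter A)
  | [] => []
  | (a, true) :: rest => (a, true, 1) :: gword rest
  | (a, false) :: rest =>
    match gword rest with
    | (b, fl, i) :: tl =>
        if a = b then (a, fl, i + 1) :: tl else (a, false, 1) :: (b, fl, i) :: tl
    | [] => [(a, false, 1)]

/-- A parenthesis symbol over a set `α` of bracket kinds. -/
inductive Par (α : Type*) : Type _
  | op (p : α)
  | cl (p : α)

/-- The generalized Dyck language over bracket kinds `α`. -/
inductive Dyck {α : Type*} : List (Par α) → Prop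
  | nil : Dyck []
  | node (p : α) {u v : List (Par α)} : Dyck u → Dyck v →
      Dyck (Par.op p :: u ++ Par.cl p :: v)

/-- The parenthesis contributed by two consecutive letters: an unbarred letter followed
by a different base letter opens a parenthesis, a barred letter closes one, and equal
consecutive bases contribute nothing (passive step). -/
def wpStep {A : Type} [DecidableEq A] (x y : BLetter A) : Option (Par (A × A)) :=
  match x with
  | (a, false) => if a = y.1 then none else some (Par.op (a, y.1))
  | (b, true) => some (Par.cl (y.1, b))

/-- The bar-erasure parenthesization pattern of a word. -/
def wpSeq {A : Type} [DecidableEq A] (xs : List (BLetter A)) : List (Par (A × A)) :=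
  (xs.zip xs.tail).filterMap (fun p => wpStep p.1 p.2)

/-- The number of letters of `w` opening a parenthesis. -/
def opensCount {A : Type} [DecidableEq A] (w : List (BLetter A)) : ℕ :=
  (w.zip w.tail).countP (fun p => !p.1.2 && decide (p.1.1 ≠ p.2.1))

/-- The number of barred (closing) letters of `w`. -/
def closesCount {A : Type} (w : List (BLetter A)) : ℕ :=
  w.countP (fun l => l.2)

lemma gword_head {A : Type} [DecidableEq A] (y : BLetter A) (rest : List (BLetter A)) :
    ∃ fl i tl, gword (y :: rest) = (y.1, fl, i) :: tl := by
  obtain ⟨a, b⟩ := y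
  cases b
  · cases h : gword rest with
    | nil => exact ⟨false, 1, [], by simp [gword, h]⟩
    | cons hd tl =>
      obtain ⟨c, fl, i⟩ := hd
      by_cases hac : a = c
      · exact ⟨fl, i+1, tl, by simp [gword, h, hac]⟩
      · exact ⟨false, 1, (c, fl, i) :: tl, by simp [gword, h, hac]⟩
  · exact ⟨true, 1, gword rest, rfl⟩

/-- If the bar-erasure pattern of `w` is a balanced parenthesization, then the number of
runs of `w` (the length of its run-length encoding `g(w)`, each run containing at most
one barred letter, at its end) is at least the number of barred letters plus the number
of letters opening a parenthesis; hence minimizing `|g(w)|` minimizes the total number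
of opens plus closes. -/
theorem runs_ge_closes_add_opens (A : Type) [DecidableEq A]
    (w : List (BLetter A)) (hbal : Dyck (wpSeq w)) :
    closesCount w + opensCount w ≤ (gword w).length := by
  clear hbal
  induction w with
  | nil => simp [gword, closesCount, opensCount]
  | cons x rest ih =>
    cases rest with
    | nil =>
      obtain ⟨a, b⟩ := x
      cases b <;> simp [gword, closesCount, opensCount]
    | cons y rest' =>
      obtain ⟨a, b⟩ := x
      obtain ⟨fl, i, tl, hg⟩ := gword_head y rest'
      have hco : closesCount ((a, b) :: y :: rest') =
          closesCount (y :: rest') + (if b then 1 else 0) := by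
        simp [closesCount, List.countP_cons]
      have hop : opensCount ((a, b) :: y :: rest') =
          opensCount (y :: rest') + (if !b && decide (a ≠ y.1) then 1 else 0) := by
        simp [opensCount, List.countP_cons]
      cases b
      · by_cases hay : a = y.1
        · have : gword ((a, false) :: y :: rest') = (a, fl, i + 1) :: tl := by
            simp [gword, hg, hay]
          rw [hco, hop, this]
          have hlen : (gword (y :: rest')).length = tl.length + 1 := by simp [hg]
          simp [hay] at *
          omega
        · have : gword ((a, false) :: y :: rest') = (a, false, 1) :: (y.1, fl, i) :: tl := by
            simp [gword, hg, hay]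
          rw [hco, hop, this]
          have hlen : (gword (y :: rest')).length = tl.length + 1 := by simp [hg]
          simp [hay] at *
          omega
      · have : gword ((a, true) :: y :: rest') = (a, true, 1) :: gword (y :: rest') := rfl
        rw [hco, hop, this]
        simp at *
        omega
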